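/- arXiv:2407.03208 — 7 statements merged into one kernel-verified Lean document; each statement's English description precedes it below -/
import Mathlib

section
/- If Ω is an ε-embedding for a subspace K with 0 ≤ ε < 1, and V ∈ ℝ^{n×k} is Ω-orthonormal (i.e., (ΩV)ᵀ(ΩV) = I_k) with columns spanning K, then the condition number of V satisfies κ(V) = σ_max(V)/σ_min(V) ≤ √((1+ε)/(1-ε)). -/
open Matrix

noncomputable def stmtEnorm {n : ℕ} (x : Fin n → ℝ) : ℝ := Real.sqrt (∑ i, x i ^ 2)

noncomputable def smax {n k : ℕ} (V : Matrix (Fin n) (Fin k) ℝ) : ℝ :=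
  sSup {c | ∃ x : Fin k → ℝ, stmtEnorm x = 1 ∧ c = stmtEnorm (V.mulVec x)}

noncomputable def smin {n k : ℕ} (V : Matrix (Fin n) (Fin k) ℝ) : ℝ :=
  sInf {c | ∃ x : Fin k → ℝ, stmtEnorm x = 1 ∧ c = stmtEnorm (V.mulVec x)}

theorem stmt1 {n k d : ℕ} (V : Matrix (Fin n) (Fin k) ℝ) (Ω : Matrix (Fin d) (Fin n) ℝ)
    (ε : ℝ) (hε0 : 0 ≤ ε) (hε1 : ε < 1)
    (K : Submodule ℝ (Fin n → ℝ))
    (hK : K = Submodule.span ℝ (Set.range (fun j : Fin k => fun i => V i j)))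
    (hemb : ∀ x ∈ K, (1 - ε) * stmtEnorm x ^ 2 ≤ stmtEnorm (Ω.mulVec x) ^ 2 ∧
      stmtEnorm (Ω.mulVec x) ^ 2 ≤ (1 + ε) * stmtEnorm x ^ 2)
    (horth : (Ω * V)ᵀ * (Ω * V) = 1) :
    smax V / smin V ≤ Real.sqrt ((1 + ε) / (1 - ε)) := by
  have h1ε : (0:ℝ) < 1 - ε := by linarith
  have h1ε' : (0:ℝ) < 1 + ε := by linarith
  set S := {c | ∃ x : Fin k → ℝ, stmtEnorm x = 1 ∧ c = stmtEnorm (V.mulVec x)} with hS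
  -- key facts about elements of S
  have key : ∀ x : Fin k → ℝ, stmtEnorm x = 1 →
      Real.sqrt (1 / (1 + ε)) ≤ stmtEnorm (V.mulVec x) ∧
      stmtEnorm (V.mulVec x) ≤ Real.sqrt (1 / (1 - ε)) := by
    intro x hx
    have hmem : V.mulVec x ∈ K := by
      rw [hK]
      have : V.mulVec x = ∑ j, x j • (fun i => V i j) := by
        funext i
        simp [mulVec, dotProduct, Finset.sum_apply, mul_comm]
      rw [this]
      exact Submodule.sum_mem _ fun j _ =>
        Submodule.smul_mem _ _ (Submodule.subset_span ⟨j, rfl⟩)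
    have hxsq : ∑ i, x i ^ 2 = 1 := by
      have h0 : (0:ℝ) ≤ ∑ i, x i ^ 2 := Finset.sum_nonneg fun i _ => sq_nonneg _
      have := congrArg (· ^ 2) hx
      simpa [stmtEnorm, Real.sq_sqrt h0] using this
    have hΩ : stmtEnorm (Ω.mulVec (V.mulVec x)) ^ 2 = 1 := by
      have h0 : (0:ℝ) ≤ ∑ i, ((Ω * V).mulVec x) i ^ 2 :=
        Finset.sum_nonneg fun i _ => sq_nonneg _
      have hcalc : ∑ i, ((Ω * V).mulVec x) i ^ 2 = 1 := by
        have : ∑ i, ((Ω * V).mulVec x) i ^ 2 = ((Ω * V).mulVec x) ⬝ᵥ ((Ω * V).mulVec x) := by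
          simp [dotProduct, sq]
        rw [this, dotProduct_mulVec, vecMul_mulVec, horth]
        simpa [dotProduct, sq] using hxsq
      rw [← mulVec_mulVec] at hcalc
      rw [stmtEnorm, Real.sq_sqrt]
      · exact hcalc
      · exact Finset.sum_nonneg fun i _ => sq_nonneg _
    obtain ⟨hlo, hhi⟩ := hemb (V.mulVec x) hmem
    rw [hΩ] at hlo hhi
    have hVn : 0 ≤ stmtEnorm (V.mulVec x) := Real.sqrt_nonneg _
    constructor
    · -- 1 ≤ (1+ε) * ‖Vx‖², so √(1/(1+ε)) ≤ ‖Vx‖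
      have h2 : 1 / (1 + ε) ≤ stmtEnorm (V.mulVec x) ^ 2 := by
        rw [div_le_iff₀ h1ε']; linarith
      calc Real.sqrt (1 / (1 + ε)) ≤ Real.sqrt (stmtEnorm (V.mulVec x) ^ 2) :=
            Real.sqrt_le_sqrt h2
        _ = stmtEnorm (V.mulVec x) := Real.sqrt_sq hVn
    · have h2 : stmtEnorm (V.mulVec x) ^ 2 ≤ 1 / (1 - ε) := by
        rw [le_div_iff₀ h1ε]; linarith
      calc stmtEnorm (V.mulVec x) = Real.sqrt (stmtEnorm (V.mulVec x) ^ 2) :=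
            (Real.sqrt_sq hVn).symm
        _ ≤ Real.sqrt (1 / (1 - ε)) := Real.sqrt_le_sqrt h2
  have hmax : smax V ≤ Real.sqrt (1 / (1 - ε)) := by
    apply Real.sSup_le
    · rintro c ⟨x, hx, rfl⟩
      exact (key x hx).2
    · exact Real.sqrt_nonneg _
  have htarget : Real.sqrt (1 / (1 - ε)) / Real.sqrt (1 / (1 + ε)) =
      Real.sqrt ((1 + ε) / (1 - ε)) := by
    rw [← Real.sqrt_div (by positivity)]
    congr 1
    field_simp
  by_cases hk : S.Nonempty
  · have hmin : Real.sqrt (1 / (1 + ε)) ≤ smin V := by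
      apply le_csInf hk
      rintro c ⟨x, hx, rfl⟩
      exact (key x hx).1
    have hb : (0:ℝ) < Real.sqrt (1 / (1 + ε)) := Real.sqrt_pos.mpr (by positivity)
    have hmin' : 0 < smin V := lt_of_lt_of_le hb hmin
    calc smax V / smin V ≤ Real.sqrt (1 / (1 - ε)) / Real.sqrt (1 / (1 + ε)) :=
          div_le_div₀ (Real.sqrt_nonneg _) hmax hb hmin
      _ = Real.sqrt ((1 + ε) / (1 - ε)) := htarget
  · have h1 : smax V = 0 := by
      rw [smax, ← hS, Set.not_nonempty_iff_eq_empty.mp hk, Real.sSup_empty]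
    have h2 : smin V = 0 := by
      rw [smin, ← hS, Set.not_nonempty_iff_eq_empty.mp hk, Real.sInf_empty]
    rw [h1, h2]
    simp [Real.sqrt_nonneg]
end

section
/- Suppose AV = VH + re_kᵀ is a k-step randomized Arnoldi factorization where V ∈ ℝ^{n×k} is Ω-orthonormal, H is unreduced upper Hessenberg, and r is Ω-orthogonal to the columns of V. If r = 0, then there exist an Ω-orthonormal matrix Q ∈ ℝ^{n×k} and an upper triangular matrix R_k ∈ ℝ^{k×k} with AQ = QR_k, and the first column v₁ of V satisfies v₁ = Qy for some y ∈ ℝᵏ. -/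
open Matrix

/-- Complex Schur decomposition: every square complex matrix is unitarily
similar to an upper triangular matrix. -/
lemma schur_aux : ∀ (m : ℕ) (B : Matrix (Fin m) (Fin m) ℂ),
    ∃ U : Matrix (Fin m) (Fin m) ℂ, Uᴴ * U = 1 ∧
      ∀ i j : Fin m, j < i → (Uᴴ * B * U) i j = 0 := by
  intro m
  induction m with
  | zero =>
    intro B
    exact ⟨1, Subsingleton.elim _ _, fun i => i.elim0⟩
  | succ m ih =>
    intro B
    -- find an eigenvector
    obtain ⟨μ, hμ⟩ := Module.End.exists_eigenvalue (Matrix.toLin' B)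
    obtain ⟨v, hv⟩ := hμ.exists_hasEigenvector
    have hv0 : v ≠ 0 := hv.right
    have hvB : B.mulVec v = μ • v := by
      have := hv.apply_eq_smul
      simpa [Matrix.toLin'_apply] using this
    -- normalize, in EuclideanSpace
    set w : EuclideanSpace ℂ (Fin (m+1)) := (WithLp.equiv 2 (Fin (m+1) → ℂ)).symm v with hwdef
    have hnv : ‖w‖ ≠ 0 := by
      simp only [norm_ne_zero_iff, hwdef]
      simpa using hv0
    set v₀ : EuclideanSpace ℂ (Fin (m+1)) := (‖w‖ : ℂ)⁻¹ • w with hv₀def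
    have hnv₀ : ‖v₀‖ = 1 := by
      rw [hv₀def, norm_smul]
      simp only [norm_inv, Complex.norm_real, Real.norm_eq_abs, abs_norm]
      exact inv_mul_cancel₀ hnv
    have hveq : (v₀ : Fin (m+1) → ℂ) = (‖w‖ : ℂ)⁻¹ • v := rfl
    have hvB₀ : B.mulVec (v₀ : Fin (m+1) → ℂ) = μ • (v₀ : Fin (m+1) → ℂ) := by
      rw [hveq, Matrix.mulVec_smul, hvB, smul_comm]
    -- extend to an orthonormal basis
    have hcard : Module.finrank ℂ (EuclideanSpace ℂ (Fin (m+1))) = Fintype.card (Fin (m+1)) := by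
      simp
    have horthov : Orthonormal ℂ (({0} : Set (Fin (m+1))).restrict (fun _ => v₀)) := by
      constructor
      · intro i; exact hnv₀
      · intro i j hij
        have hij' : i = j := by
          apply Subtype.ext
          have hi := i.2
          have hj := j.2
          simp only [Set.mem_singleton_iff] at hi hj
          rw [hi, hj]
        exact absurd hij' hij
    obtain ⟨b, hb⟩ := horthov.exists_orthonormalBasis_extension_of_card_eq hcard
    have hb0 : b 0 = v₀ := hb 0 rfl
    -- the unitary matrix with columns the orthonormal basis
    set U : Matrix (Fin (m+1)) (Fin (m+1)) ℂ := Matrix.of fun i j => b j i with hUdef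
    have hinner : ∀ i j : Fin (m+1), ∑ k, (starRingEnd ℂ) (b i k) * b j k
        = if i = j then 1 else 0 := by
      intro i j
      have h := orthonormal_iff_ite.mp b.orthonormal i j
      rw [PiLp.inner_apply] at h
      simp [RCLike.inner_apply] at h
      rw [← h]
      exact Finset.sum_congr rfl fun k _ => mul_comm _ _
    have hUU : Uᴴ * U = 1 := by
      ext i j
      rw [Matrix.mul_apply, Matrix.one_apply]
      simpa [hUdef, Matrix.conjTranspose_apply] using hinner i j
    set T : Matrix (Fin (m+1)) (Fin (m+1)) ℂ := Uᴴ * B * U with hTdef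
    have hcol : ∀ i : Fin (m+1), i ≠ 0 → T i 0 = 0 := by
      intro i hi
      rw [hTdef, Matrix.mul_assoc, Matrix.mul_apply]
      have hBU : ∀ k, (B * U) k 0 = μ * v₀ k := by
        intro k
        have h1 : (B * U) k 0 = B.mulVec (fun j => U j 0) k := by
          rw [Matrix.mul_apply, Matrix.mulVec]
          rfl
        rw [h1]
        have h2 : (fun j => U j 0) = (v₀ : Fin (m+1) → ℂ) := by
          funext j; simp [hUdef, hb0]
        rw [h2, hvB₀]
        simp [Pi.smul_apply]
      calc ∑ k, Uᴴ i k * (B * U) k 0 = μ * ∑ k, (starRingEnd ℂ) (b i k) * b 0 k := by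
            rw [Finset.mul_sum]
            refine Finset.sum_congr rfl fun k _ => ?_
            rw [hBU k, Matrix.conjTranspose_apply, hb0]
            simp [hUdef]
            ring
        _ = 0 := by rw [hinner i 0, if_neg hi, mul_zero]
    -- apply the induction hypothesis to the trailing block of T
    obtain ⟨U', hU'U', hS⟩ := ih (Matrix.of fun (i j : Fin m) => T i.succ j.succ)
    -- the block matrix diag(1, U')
    set W : Matrix (Fin (m+1)) (Fin (m+1)) ℂ :=
      Matrix.of (Fin.cons (Fin.cons 1 0) (fun i' => Fin.cons 0 (U' i'))) with hWdef
    have hW00 : W 0 0 = 1 := rfl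
    have hW0s : ∀ j : Fin m, W 0 j.succ = 0 := fun j => rfl
    have hWs0 : ∀ i : Fin m, W i.succ 0 = 0 := fun i => rfl
    have hWss : ∀ i j : Fin m, W i.succ j.succ = U' i j := fun i j => rfl
    have hWW : Wᴴ * W = 1 := by
      ext i j
      rw [Matrix.mul_apply, Matrix.one_apply]
      simp only [Matrix.conjTranspose_apply]
      induction i using Fin.cases with
      | zero =>
        induction j using Fin.cases with
        | zero => simp [Fin.sum_univ_succ, hW00, hWs0]
        | succ j' => simp [Fin.sum_univ_succ, hW00, hWs0, hW0s, Fin.succ_ne_zero, eq_comm]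
      | succ i' =>
        induction j using Fin.cases with
        | zero => simp [Fin.sum_univ_succ, hW00, hWs0, hW0s, Fin.succ_ne_zero]
        | succ j' =>
          have h := congrFun (congrFun hU'U' i') j'
          rw [Matrix.mul_apply] at h
          simp only [Matrix.conjTranspose_apply] at h
          simp only [Fin.sum_univ_succ, hW0s, hWss, star_zero, zero_mul, zero_add]
          rw [h]
          simp [Matrix.one_apply, Fin.succ_inj]
    have hWTW : ∀ i j : Fin (m+1), j < i → (Wᴴ * T * W) i j = 0 := by
      intro i j hji
      have hi0 : i ≠ 0 := by
        intro h; rw [h] at hji; exact absurd hji (Fin.not_lt_zero j)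
      obtain ⟨i', rfl⟩ := Fin.exists_succ_eq.mpr hi0
      rw [Matrix.mul_assoc, Matrix.mul_apply]
      have hTW : ∀ a : Fin (m+1), ∀ j' : Fin m,
          (T * W) a j'.succ = ∑ k', T a k'.succ * U' k' j' := by
        intro a j'
        rw [Matrix.mul_apply, Fin.sum_univ_succ]
        simp [hW0s, hWss]
      induction j using Fin.cases with
      | zero =>
        have hTW0 : ∀ a : Fin (m+1), (T * W) a 0 = T a 0 := by
          intro a
          rw [Matrix.mul_apply, Fin.sum_univ_succ]
          simp [hW00, hWs0]
        rw [Fin.sum_univ_succ]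
        simp only [Matrix.conjTranspose_apply, hW0s, star_zero, zero_mul, zero_add]
        refine Finset.sum_eq_zero fun k _ => ?_
        rw [hTW0, hcol k.succ (Fin.succ_ne_zero k)]
        ring
      | succ j' =>
        have hj'i' : j' < i' := Fin.succ_lt_succ_iff.mp hji
        have h := hS i' j' hj'i'
        rw [Matrix.mul_assoc, Matrix.mul_apply] at h
        rw [Fin.sum_univ_succ]
        simp only [Matrix.conjTranspose_apply, hW0s, star_zero, zero_mul, zero_add]
        rw [← h]
        refine Finset.sum_congr rfl fun a _ => ?_
        rw [hTW a.succ j', hWss, Matrix.conjTranspose_apply, Matrix.mul_apply]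
        simp
    -- combine
    refine ⟨U * W, ?_, ?_⟩
    · rw [Matrix.conjTranspose_mul, Matrix.mul_assoc, ← Matrix.mul_assoc Uᴴ U W, hUU,
        Matrix.one_mul, hWW]
    · intro i j hji
      have : (U * W)ᴴ * B * (U * W) = Wᴴ * T * W := by
        rw [hTdef, Matrix.conjTranspose_mul]
        noncomm_ring
      rw [this]
      exact hWTW i j hji

theorem stmt6 {n K d : ℕ} (A : Matrix (Fin n) (Fin n) ℝ) (Ω : Matrix (Fin d) (Fin n) ℝ)
    (V : Matrix (Fin n) (Fin (K + 1)) ℝ) (H : Matrix (Fin (K + 1)) (Fin (K + 1)) ℝ)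
    (r : Fin n → ℝ)
    (horth : (Ω * V)ᵀ * (Ω * V) = 1)
    (hhess : ∀ i j : Fin (K + 1), (j : ℕ) + 1 < (i : ℕ) → H i j = 0)
    (hunred : ∀ i j : Fin (K + 1), (i : ℕ) = (j : ℕ) + 1 → 0 < H i j)
    (hfact : A * V = V * H + Matrix.vecMulVec r (Pi.single (Fin.last K) 1))
    (hrorth : (Ω * V)ᵀ.mulVec (Ω.mulVec r) = 0)
    (hr : r = 0) :
    ∃ (Q : Matrix (Fin n) (Fin (K + 1)) ℂ) (R : Matrix (Fin (K + 1)) (Fin (K + 1)) ℂ)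
      (y : Fin (K + 1) → ℂ),
      ((Ω.map Complex.ofReal) * Q)ᴴ * ((Ω.map Complex.ofReal) * Q) = 1 ∧
      (A.map Complex.ofReal) * Q = Q * R ∧
      R.BlockTriangular (id : Fin (K + 1) → Fin (K + 1)) ∧
      (fun i => (V i 0 : ℂ)) = Q.mulVec y := by
  subst hr
  have hfact' : A * V = V * H := by
    have hz : Matrix.vecMulVec (0 : Fin n → ℝ) (Pi.single (Fin.last K) 1) = 0 := by
      ext i j; simp [Matrix.vecMulVec_apply]
    rw [hfact, hz, add_zero]
  -- complexify
  have hmap : ∀ {p q s : ℕ} (M : Matrix (Fin p) (Fin q) ℝ) (N : Matrix (Fin q) (Fin s) ℝ),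
      (M * N).map Complex.ofReal = M.map Complex.ofReal * N.map Complex.ofReal := by
    intro p q s M N
    exact Matrix.map_mul (f := Complex.ofRealHom)
  have hfactC : A.map Complex.ofReal * V.map Complex.ofReal
      = V.map Complex.ofReal * H.map Complex.ofReal := by
    rw [← hmap, ← hmap, hfact']
  have hconj : ∀ {p q : ℕ} (M : Matrix (Fin p) (Fin q) ℝ),
      (M.map Complex.ofReal)ᴴ = Mᵀ.map Complex.ofReal := by
    intro p q M
    ext i j
    simp [Matrix.conjTranspose_apply, Complex.conj_ofReal]
  have horthC : (Ω.map Complex.ofReal * V.map Complex.ofReal)ᴴ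
      * (Ω.map Complex.ofReal * V.map Complex.ofReal) = 1 := by
    rw [← hmap Ω V, hconj, ← hmap ((Ω * V)ᵀ) (Ω * V), horth]
    exact Matrix.map_one _ Complex.ofReal_zero Complex.ofReal_one
  obtain ⟨U, hUU, htri⟩ := schur_aux (K + 1) (H.map Complex.ofReal)
  have hUU' : U * Uᴴ = 1 := mul_eq_one_comm.mp hUU
  refine ⟨V.map Complex.ofReal * U, Uᴴ * H.map Complex.ofReal * U,
    Uᴴ.mulVec (Pi.single 0 1), ?_, ?_, ?_, ?_⟩
  · have e1 : Ω.map Complex.ofReal * (V.map Complex.ofReal * U)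
        = Ω.map Complex.ofReal * V.map Complex.ofReal * U := by
      rw [Matrix.mul_assoc]
    rw [e1, Matrix.conjTranspose_mul, Matrix.mul_assoc,
      ← Matrix.mul_assoc ((Ω.map Complex.ofReal * V.map Complex.ofReal)ᴴ), horthC,
      Matrix.one_mul, hUU]
  · have h1 : A.map Complex.ofReal * (V.map Complex.ofReal * U)
        = V.map Complex.ofReal * H.map Complex.ofReal * U := by
      rw [← Matrix.mul_assoc, hfactC]
    have h2 : V.map Complex.ofReal * U * (Uᴴ * H.map Complex.ofReal * U)
        = V.map Complex.ofReal * ((U * Uᴴ) * (H.map Complex.ofReal * U)) := by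
      simp only [Matrix.mul_assoc]
    rw [h1, h2, hUU', Matrix.one_mul, Matrix.mul_assoc]
  · intro i j hij
    exact htri i j hij
  · rw [Matrix.mulVec_mulVec]
    have h3 : V.map Complex.ofReal * U * Uᴴ = V.map Complex.ofReal := by
      rw [Matrix.mul_assoc, hUU', Matrix.mul_one]
    rw [h3]
    funext i
    simp [Matrix.mulVec, dotProduct, Pi.single_apply]
end

section
/- Suppose AV = VH + re_kᵀ with V ∈ ℝ^{n×k} Ω-orthonormal, H unreduced upper Hessenberg, r Ω-orthogonal to V, and V(:,1) = v₁. If v₁ = Qy for some Ω-orthonormal Q ∈ ℝ^{n×k} with AQ = QR (R upper triangular) and some y ∈ ℝᵏ, then r = 0 and the columns of V span an invariant subspace of A. -/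
open Matrix

lemma sum_dotProduct' {m p : ℕ} (f : Fin m → (Fin p → ℝ)) (g : Fin m → ℝ) (v : Fin p → ℝ) :
    (∑ i, g i • f i) ⬝ᵥ v = ∑ i, g i * (f i ⬝ᵥ v) := by
  simp [dotProduct, Finset.sum_apply, Finset.sum_mul, Finset.mul_sum]
  rw [Finset.sum_comm]
  congr 1; ext i; congr 1; ext l; ring

lemma li_of_orth {m p : ℕ} (f : Fin m → (Fin p → ℝ))
    (ho : ∀ i j, i ≠ j → f i ⬝ᵥ f j = 0) (hnz : ∀ i, f i ⬝ᵥ f i ≠ 0) :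
    LinearIndependent ℝ f := by
  rw [Fintype.linearIndependent_iff]
  intro g hg j
  have h : (∑ i, g i • f i) ⬝ᵥ f j = 0 := by rw [hg]; simp [dotProduct]
  rw [sum_dotProduct'] at h
  rw [Finset.sum_eq_single j (fun i _ hi => by rw [ho i j hi, mul_zero])
    (fun h => absurd (Finset.mem_univ j) h)] at h
  exact (mul_eq_zero.mp h).resolve_right (hnz j)

lemma mulVec_sum' {n m : ℕ} (M : Matrix (Fin n) (Fin m) ℝ) (c : Fin m → ℝ) :
    M.mulVec c = ∑ j, c j • (fun i => M i j) := by
  ext i; simp [Matrix.mulVec, dotProduct, Finset.sum_apply, mul_comm]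

noncomputable def enorm' {n : ℕ} (x : Fin n → ℝ) : ℝ := Real.sqrt (∑ i, x i ^ 2)

theorem stmt7 {n K d : ℕ} (A : Matrix (Fin n) (Fin n) ℝ) (Ω : Matrix (Fin d) (Fin n) ℝ)
    (V : Matrix (Fin n) (Fin (K + 1)) ℝ) (H : Matrix (Fin (K + 1)) (Fin (K + 1)) ℝ)
    (r : Fin n → ℝ) (ε : ℝ) (hε0 : 0 ≤ ε) (hε1 : ε < 1)
    (hemb : ∀ x ∈ Submodule.span ℝ
        (Set.range (fun j : Fin (K + 1) => fun i => V i j) ∪ {r}),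
      (1 - ε) * enorm' x ^ 2 ≤ enorm' (Ω.mulVec x) ^ 2 ∧
        enorm' (Ω.mulVec x) ^ 2 ≤ (1 + ε) * enorm' x ^ 2)
    (horth : (Ω * V)ᵀ * (Ω * V) = 1)
    (hhess : ∀ i j : Fin (K + 1), (j : ℕ) + 1 < (i : ℕ) → H i j = 0)
    (hunred : ∀ i j : Fin (K + 1), (i : ℕ) = (j : ℕ) + 1 → 0 < H i j)
    (hfact : A * V = V * H + Matrix.vecMulVec r (Pi.single (Fin.last K) 1))
    (hrorth : (Ω * V)ᵀ.mulVec (Ω.mulVec r) = 0)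
    (Q : Matrix (Fin n) (Fin (K + 1)) ℝ) (R : Matrix (Fin (K + 1)) (Fin (K + 1)) ℝ)
    (hQorth : (Ω * Q)ᵀ * (Ω * Q) = 1)
    (hQR : A * Q = Q * R)
    (hRtri : R.BlockTriangular (id : Fin (K + 1) → Fin (K + 1)))
    (y : Fin (K + 1) → ℝ)
    (hv1 : (fun i => V i 0) = Q.mulVec y) :
    r = 0 ∧ ∀ c : Fin (K + 1) → ℝ, ∃ c' : Fin (K + 1) → ℝ,
      A.mulVec (V.mulVec c) = V.mulVec c' := by
  set colV : Fin (K + 1) → (Fin n → ℝ) := fun j i => V i j with hcolV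
  set S : Submodule ℝ (Fin n → ℝ) := LinearMap.range Q.mulVecLin with hS
  -- S is A-invariant
  have hAS : ∀ x ∈ S, A.mulVec x ∈ S := by
    rintro _ ⟨c, rfl⟩
    refine ⟨R.mulVec c, ?_⟩
    simp only [Matrix.mulVecLin_apply, Matrix.mulVec_mulVec, hQR]
  -- column equation
  have hcol : ∀ j : Fin (K + 1),
      A.mulVec (colV j) = V.mulVec (fun l => H l j) + (Pi.single (Fin.last K) (1:ℝ) : Fin (K+1) → ℝ) j • r := by
    intro j; funext i
    have h := congrFun (congrFun hfact i) j
    simp only [Matrix.mul_apply, Matrix.add_apply, Matrix.vecMulVec_apply] at h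
    simp only [Matrix.mulVec, dotProduct, Pi.add_apply, Pi.smul_apply, smul_eq_mul, hcolV]
    rw [h]; ring
  -- columns of V lie in S
  have key : ∀ m : ℕ, ∀ hm : m < K + 1, colV ⟨m, hm⟩ ∈ S := by
    intro m
    induction m using Nat.strong_induction_on with
    | _ m IH =>
      intro hm
      match m, hm with
      | 0, hm =>
        have h0 : (⟨0, hm⟩ : Fin (K + 1)) = 0 := rfl
        rw [h0]
        exact ⟨y, hv1.symm⟩
      | (m' + 1), hm =>
        have hm' : m' < K + 1 := Nat.lt_of_succ_lt hm
        set j' : Fin (K + 1) := ⟨m', hm'⟩ with hj'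
        set j : Fin (K + 1) := ⟨m' + 1, hm⟩ with hj
        have hAv : A.mulVec (colV j') ∈ S := hAS _ (IH m' (Nat.lt_succ_self m') hm')
        have hne : j' ≠ Fin.last K := by
          intro h
          have : m' = K := by simpa [hj', Fin.ext_iff] using h
          omega
        have hsingle : ((Pi.single (Fin.last K) (1:ℝ) : Fin (K+1) → ℝ) j' : ℝ) = 0 :=
          Pi.single_eq_of_ne hne 1
        have heq : (∑ l, H l j' • colV l) = A.mulVec (colV j') := by
          rw [hcol j', hsingle, zero_smul, add_zero, mulVec_sum']
        have hsum : (∑ l, H l j' • colV l) ∈ S := heq ▸ hAv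
        have herase : ∀ l ∈ Finset.univ.erase j, H l j' • colV l ∈ S := by
          intro l hl
          have hlj : l ≠ j := (Finset.mem_erase.mp hl).1
          by_cases hlt : (l : ℕ) < m' + 1
          · exact Submodule.smul_mem _ _ (by
              have : colV ⟨(l : ℕ), l.isLt⟩ ∈ S := IH (l : ℕ) hlt l.isLt
              simpa using this)
          · have hgt : m' + 1 < (l : ℕ) := by
              rcases Nat.lt_or_ge (m' + 1) (l : ℕ) with h | h
              · exact h
              · exfalso
                apply hlj
                have hjv : (j : ℕ) = m' + 1 := rfl
                exact Fin.ext (by omega)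
            rw [hhess l j' hgt, zero_smul]
            exact Submodule.zero_mem _
        have hmem : H j j' • colV j ∈ S := by
          have h1 : H j j' • colV j =
              (∑ l, H l j' • colV l) - ∑ l ∈ Finset.univ.erase j, H l j' • colV l := by
            rw [Finset.sum_erase_eq_sub (Finset.mem_univ j)]
            abel
          rw [h1]
          exact Submodule.sub_mem _ hsum (Submodule.sum_mem _ herase)
        have hHpos : H j j' ≠ 0 := ne_of_gt (hunred j j' rfl)
        have : colV j = (H j j')⁻¹ • (H j j' • colV j) := by
          rw [smul_smul, inv_mul_cancel₀ hHpos, one_smul]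
        rw [this]
        exact Submodule.smul_mem _ _ hmem
  have hVS : ∀ j : Fin (K + 1), colV j ∈ S := fun j => by
    have := key (j : ℕ) j.isLt
    simpa using this
  -- r ∈ S
  have hrS : r ∈ S := by
    have h := hcol (Fin.last K)
    rw [Pi.single_eq_same, one_smul] at h
    have : r = A.mulVec (colV (Fin.last K)) - V.mulVec (fun l => H l (Fin.last K)) := by
      rw [h]; abel
    rw [this]
    refine Submodule.sub_mem _ (hAS _ (hVS _)) ?_
    rw [mulVec_sum']
    exact Submodule.sum_mem _ fun l _ => Submodule.smul_mem _ _ (hVS l)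
  -- r = 0
  have hr0 : r = 0 := by
    by_contra hr
    -- Ω r ≠ 0
    have hrspan : r ∈ Submodule.span ℝ
        (Set.range (fun j : Fin (K + 1) => fun i => V i j) ∪ {r}) :=
      Submodule.subset_span (Or.inr rfl)
    have hrpos : 0 < ∑ i, r i ^ 2 := by
      obtain ⟨i, hi⟩ := Function.ne_iff.mp hr
      exact Finset.sum_pos' (fun _ _ => sq_nonneg _) ⟨i, Finset.mem_univ _, pow_two_pos_of_ne_zero hi⟩
    have hΩr : (Ω.mulVec r) ⬝ᵥ (Ω.mulVec r) ≠ 0 := by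
      have h1 := (hemb r hrspan).1
      have e1 : enorm' r ^ 2 = ∑ i, r i ^ 2 :=
        Real.sq_sqrt (Finset.sum_nonneg fun _ _ => sq_nonneg _)
      have e2 : enorm' (Ω.mulVec r) ^ 2 = ∑ i, (Ω.mulVec r) i ^ 2 :=
        Real.sq_sqrt (Finset.sum_nonneg fun _ _ => sq_nonneg _)
      rw [e1, e2] at h1
      have : 0 < ∑ i, (Ω.mulVec r) i ^ 2 := by nlinarith
      have hd : (Ω.mulVec r) ⬝ᵥ (Ω.mulVec r) = ∑ i, (Ω.mulVec r) i ^ 2 := by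
        simp [dotProduct, sq]
      rw [hd]; exact ne_of_gt this
    -- orthonormality of Ω V columns
    have hoV : ∀ i j : Fin (K + 1),
        (Ω.mulVec (colV i)) ⬝ᵥ (Ω.mulVec (colV j)) = if i = j then 1 else 0 := by
      intro i j
      have h := congrFun (congrFun horth i) j
      simp only [Matrix.mul_apply, Matrix.transpose_apply, Matrix.one_apply] at h
      simpa [dotProduct, Matrix.mulVec, Matrix.mul_apply, hcolV] using h
    have hoVr : ∀ i : Fin (K + 1), (Ω.mulVec (colV i)) ⬝ᵥ (Ω.mulVec r) = 0 := by
      intro i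
      have h := congrFun hrorth i
      simpa [Matrix.mulVec, dotProduct, Matrix.mul_apply, hcolV] using h
    -- build family
    set g : Fin (K + 2) → (Fin d → ℝ) :=
      Fin.snoc (fun i : Fin (K + 1) => Ω.mulVec (colV i)) (Ω.mulVec r) with hg
    have hgo : ∀ a b : Fin (K + 2), a ≠ b → g a ⬝ᵥ g b = 0 := by
      intro a b hab
      induction a using Fin.lastCases with
      | last =>
        induction b using Fin.lastCases with
        | last => exact absurd rfl hab
        | cast i =>
          rw [dotProduct_comm]
          simpa [hg, Fin.snoc_castSucc, Fin.snoc_last] using hoVr i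
      | cast i =>
        induction b using Fin.lastCases with
        | last => simpa [hg, Fin.snoc_castSucc, Fin.snoc_last] using hoVr i
        | cast i' =>
          have hne : i ≠ i' := fun h => hab (by rw [h])
          simpa [hg, Fin.snoc_castSucc, hne] using hoV i i'
    have hgnz : ∀ a, g a ⬝ᵥ g a ≠ 0 := by
      intro a
      induction a using Fin.lastCases with
      | last => simpa [hg, Fin.snoc_last] using hΩr
      | cast i =>
        have := hoV i i
        simp only [if_pos rfl] at this
        simp [hg, Fin.snoc_castSucc, this]
    have hli : LinearIndependent ℝ g := li_of_orth g hgo hgnz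
    set T : Submodule ℝ (Fin d → ℝ) := Submodule.map Ω.mulVecLin S with hT
    have hmemT : ∀ a, g a ∈ T := by
      intro a
      induction a using Fin.lastCases with
      | last => exact ⟨r, hrS, by simp [hg, Fin.snoc_last, Matrix.mulVecLin_apply]⟩
      | cast i => exact ⟨colV i, hVS i, by simp [hg, Fin.snoc_castSucc, Matrix.mulVecLin_apply]⟩
    set g' : Fin (K + 2) → T := fun a => ⟨g a, hmemT a⟩ with hg'
    have hli' : LinearIndependent ℝ g' := by
      apply LinearIndependent.of_comp T.subtype
      convert hli
      rfl
    have hcard := hli'.fintype_card_le_finrank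
    have h1 : Module.finrank ℝ T ≤ Module.finrank ℝ S := Submodule.finrank_map_le _ _
    have h2 : Module.finrank ℝ S ≤ K + 1 := by
      calc Module.finrank ℝ S ≤ Module.finrank ℝ (Fin (K + 1) → ℝ) :=
            LinearMap.finrank_range_le _
        _ = K + 1 := Module.finrank_fin_fun ℝ
    simp only [Fintype.card_fin] at hcard
    omega
  subst hr0
  refine ⟨rfl, fun c => ⟨H.mulVec c, ?_⟩⟩
  have hz : Matrix.vecMulVec (0 : Fin n → ℝ) (Pi.single (Fin.last K) (1:ℝ)) = 0 := by
    ext i j; simp [Matrix.vecMulVec_apply]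
  rw [hz, add_zero] at hfact
  rw [Matrix.mulVec_mulVec, Matrix.mulVec_mulVec, hfact]
end

section
/- (Randomized implicit Q-theorem.) Let AV = VH + re_kᵀ and AQ = QG + fe_kᵀ be two factorizations where V, Q ∈ ℝ^{n×k} are Ω-orthonormal, H, G ∈ ℝ^{k×k} are upper Hessenberg with positive subdiagonal elements, (ΩV)ᵀ(Ωr) = 0, and (ΩQ)ᵀ(Ωf) = 0. If Ve₁ = Qe₁, then V = Q, H = G, and r = f. -/
open Matrix

lemma mul_vecMulVec' {m p q : Type*} [Fintype p] (M : Matrix m p ℝ) (a : p → ℝ) (b : q → ℝ) :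
    M * Matrix.vecMulVec a b = Matrix.vecMulVec (M.mulVec a) b := by
  ext i j
  simp [Matrix.mul_apply, Matrix.vecMulVec_apply, Matrix.mulVec, dotProduct,
    Finset.sum_mul, mul_assoc]

lemma keyH {n K d : ℕ} (A : Matrix (Fin n) (Fin n) ℝ) (Ω : Matrix (Fin d) (Fin n) ℝ)
    (V : Matrix (Fin n) (Fin (K + 1)) ℝ) (H : Matrix (Fin (K + 1)) (Fin (K + 1)) ℝ)
    (r : Fin n → ℝ)
    (hVorth : (Ω * V)ᵀ * (Ω * V) = 1)
    (hfactV : A * V = V * H + Matrix.vecMulVec r (Pi.single (Fin.last K) 1))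
    (hrorth : (Ω * V)ᵀ.mulVec (Ω.mulVec r) = 0) :
    (Ω * V)ᵀ * (Ω * A * V) = H := by
  have h0 : Ω * A * V = Ω * (A * V) := Matrix.mul_assoc _ _ _
  have hz : Matrix.vecMulVec (0 : Fin (K + 1) → ℝ) (Pi.single (Fin.last K) (1:ℝ)) = 0 := by
    ext i j; simp [Matrix.vecMulVec_apply]
  rw [h0, hfactV, Matrix.mul_add, Matrix.mul_add, mul_vecMulVec', mul_vecMulVec', hrorth,
    hz, add_zero, show Ω * (V * H) = Ω * V * H from (Matrix.mul_assoc _ _ _).symm,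
    ← Matrix.mul_assoc, hVorth, Matrix.one_mul]


noncomputable def vecEnorm {n : ℕ} (x : Fin n → ℝ) : ℝ := Real.sqrt (∑ i, x i ^ 2)

theorem stmt9 {n K d : ℕ} (A : Matrix (Fin n) (Fin n) ℝ) (Ω : Matrix (Fin d) (Fin n) ℝ)
    (V Q : Matrix (Fin n) (Fin (K + 1)) ℝ) (H G : Matrix (Fin (K + 1)) (Fin (K + 1)) ℝ)
    (r f : Fin n → ℝ) (ε : ℝ) (hε0 : 0 ≤ ε) (hε1 : ε < 1)
    (hemb : ∀ x ∈ Submodule.span ℝ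
        (Set.range (fun j : Fin (K + 1) => fun i => V i j) ∪
          Set.range (fun j : Fin (K + 1) => fun i => Q i j) ∪ {r, f}),
      (1 - ε) * vecEnorm x ^ 2 ≤ vecEnorm (Ω.mulVec x) ^ 2 ∧
        vecEnorm (Ω.mulVec x) ^ 2 ≤ (1 + ε) * vecEnorm x ^ 2)
    (hVorth : (Ω * V)ᵀ * (Ω * V) = 1)
    (hQorth : (Ω * Q)ᵀ * (Ω * Q) = 1)
    (hHhess : ∀ i j : Fin (K + 1), (j : ℕ) + 1 < (i : ℕ) → H i j = 0)
    (hHpos : ∀ i j : Fin (K + 1), (i : ℕ) = (j : ℕ) + 1 → 0 < H i j)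
    (hGhess : ∀ i j : Fin (K + 1), (j : ℕ) + 1 < (i : ℕ) → G i j = 0)
    (hGpos : ∀ i j : Fin (K + 1), (i : ℕ) = (j : ℕ) + 1 → 0 < G i j)
    (hfactV : A * V = V * H + Matrix.vecMulVec r (Pi.single (Fin.last K) 1))
    (hfactQ : A * Q = Q * G + Matrix.vecMulVec f (Pi.single (Fin.last K) 1))
    (hrorth : (Ω * V)ᵀ.mulVec (Ω.mulVec r) = 0)
    (hforth : (Ω * Q)ᵀ.mulVec (Ω.mulVec f) = 0)
    (hstart : (fun i => V i 0) = fun i => Q i 0) :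
    V = Q ∧ H = G ∧ r = f := by
  have hH := keyH A Ω V H r hVorth hfactV hrorth
  have hG := keyH A Ω Q G f hQorth hfactQ hforth
  -- main column induction
  have main : ∀ m : ℕ, ∀ hm : m < K + 1, ∀ i, V i ⟨m, hm⟩ = Q i ⟨m, hm⟩ := by
    intro m
    induction m using Nat.strong_induction_on with
    | _ m ih =>
      match m with
      | 0 =>
        intro hm i
        have h0 : (⟨0, hm⟩ : Fin (K + 1)) = 0 := Fin.ext (by simp)
        rw [h0]
        exact congrFun hstart i
      | (j + 1) =>
        intro hm i
        have hjK : j < K := Nat.lt_of_succ_lt_succ hm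
        set jF : Fin (K + 1) := ⟨j, by omega⟩ with hjF
        set j1 : Fin (K + 1) := ⟨j + 1, hm⟩ with hj1
        -- columns up to j are equal
        have colV : ∀ l : Fin (K + 1), (l : ℕ) ≤ j → (fun i => V i l) = fun i => Q i l := by
          intro l hl
          funext i
          have := ih l.val (by omega) l.isLt i
          simpa using this
        -- H l jF = G l jF for l ≤ j
        have hHGl : ∀ l : Fin (K + 1), (l : ℕ) ≤ j → H l jF = G l jF := by
          intro l hl
          have hVl := colV l hl
          have hVj := colV jF (le_refl j)
          rw [← hH, ← hG]
          simp only [Matrix.mul_apply, Matrix.transpose_apply]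
          refine Finset.sum_congr rfl fun m _ => ?_
          congr 1
          · exact Finset.sum_congr rfl fun i _ => by rw [congrFun hVl i]
          · exact Finset.sum_congr rfl fun i _ => by rw [congrFun hVj i]
        -- column relation gives V_{j+1} * H_{j+1,j} = Q_{j+1} * G_{j+1,j}
        have hcoleq : ∀ i, V i j1 * H j1 jF = Q i j1 * G j1 jF := by
          intro i
          have hjlast : jF ≠ Fin.last K := by
            intro h
            have : (jF : ℕ) = K := by rw [h]; simp
            simp [hjF] at this; omega
          have he : (Pi.single (Fin.last K) 1 : Fin (K+1) → ℝ) jF = 0 := by simp [Pi.single_apply, hjlast]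
          have hV := congrFun (congrFun hfactV i) jF
          have hQ := congrFun (congrFun hfactQ i) jF
          simp only [Matrix.add_apply, Matrix.vecMulVec_apply, he, mul_zero, add_zero] at hV hQ
          have hL : (A * V) i jF = (A * Q) i jF := by
            simp only [Matrix.mul_apply]
            exact Finset.sum_congr rfl fun l _ => by rw [congrFun (colV jF (le_refl j)) l]
          have key : ∑ l, V i l * H l jF = ∑ l, Q i l * G l jF := by
            have : (V * H) i jF = (Q * G) i jF := by rw [← hV, ← hQ]; exact hL
            simpa [Matrix.mul_apply] using this
          have hsingle : ∑ l, (V i l * H l jF - Q i l * G l jF)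
              = V i j1 * H j1 jF - Q i j1 * G j1 jF := by
            apply Finset.sum_eq_single_of_mem j1 (Finset.mem_univ _)
            intro l _ hlne
            have hlv : (l : ℕ) ≠ j + 1 := fun h => hlne (Fin.ext h)
            rcases lt_or_gt_of_ne hlv with h | h
            · have hle : (l : ℕ) ≤ j := Nat.lt_succ_iff.mp h
              rw [congrFun (colV l hle) i, hHGl l hle, sub_self]
            · have h1 : H l jF = 0 := hHhess l jF (by simpa [hjF] using h)
              have h2 : G l jF = 0 := hGhess l jF (by simpa [hjF] using h)
              rw [h1, h2]; ring
          rw [Finset.sum_sub_distrib, key, sub_self] at hsingle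
          linarith [hsingle]
        -- norms
        have hnormV : ∑ m', (∑ i, Ω m' i * V i j1) * (∑ i, Ω m' i * V i j1) = 1 := by
          have := congrFun (congrFun hVorth j1) j1
          simpa [Matrix.mul_apply, Matrix.transpose_apply, Matrix.one_apply, mul_comm] using this
        have hnormQ : ∑ m', (∑ i, Ω m' i * Q i j1) * (∑ i, Ω m' i * Q i j1) = 1 := by
          have := congrFun (congrFun hQorth j1) j1
          simpa [Matrix.mul_apply, Matrix.transpose_apply, Matrix.one_apply, mul_comm] using this
        have hHp : 0 < H j1 jF := hHpos j1 jF (by simp [hj1, hjF])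
        have hGp : 0 < G j1 jF := hGpos j1 jF (by simp [hj1, hjF])
        have hsq : H j1 jF * H j1 jF = G j1 jF * G j1 jF := by
          have hA : ∑ m', (∑ i, Ω m' i * (V i j1 * H j1 jF)) * (∑ i, Ω m' i * (V i j1 * H j1 jF))
              = H j1 jF * H j1 jF := by
            have hx : ∀ m', ∑ i, Ω m' i * (V i j1 * H j1 jF)
                = (∑ i, Ω m' i * V i j1) * H j1 jF := by
              intro m'; rw [Finset.sum_mul]; exact Finset.sum_congr rfl fun i _ => by ring
            calc ∑ m', (∑ i, Ω m' i * (V i j1 * H j1 jF)) * (∑ i, Ω m' i * (V i j1 * H j1 jF))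
                = ∑ m', ((∑ i, Ω m' i * V i j1) * (∑ i, Ω m' i * V i j1))
                    * (H j1 jF * H j1 jF) := by
                  refine Finset.sum_congr rfl fun m' _ => ?_; rw [hx m']; ring
              _ = (∑ m', (∑ i, Ω m' i * V i j1) * (∑ i, Ω m' i * V i j1))
                    * (H j1 jF * H j1 jF) := by rw [Finset.sum_mul]
              _ = H j1 jF * H j1 jF := by rw [hnormV, one_mul]
          have hB : ∑ m', (∑ i, Ω m' i * (Q i j1 * G j1 jF)) * (∑ i, Ω m' i * (Q i j1 * G j1 jF))
              = G j1 jF * G j1 jF := by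
            have hx : ∀ m', ∑ i, Ω m' i * (Q i j1 * G j1 jF)
                = (∑ i, Ω m' i * Q i j1) * G j1 jF := by
              intro m'; rw [Finset.sum_mul]; exact Finset.sum_congr rfl fun i _ => by ring
            calc ∑ m', (∑ i, Ω m' i * (Q i j1 * G j1 jF)) * (∑ i, Ω m' i * (Q i j1 * G j1 jF))
                = ∑ m', ((∑ i, Ω m' i * Q i j1) * (∑ i, Ω m' i * Q i j1))
                    * (G j1 jF * G j1 jF) := by
                  refine Finset.sum_congr rfl fun m' _ => ?_; rw [hx m']; ring
              _ = (∑ m', (∑ i, Ω m' i * Q i j1) * (∑ i, Ω m' i * Q i j1))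
                    * (G j1 jF * G j1 jF) := by rw [Finset.sum_mul]
              _ = G j1 jF * G j1 jF := by rw [hnormQ, one_mul]
          rw [← hA, ← hB]
          refine Finset.sum_congr rfl fun m' _ => ?_
          congr 1 <;> exact Finset.sum_congr rfl fun i _ => by rw [hcoleq i]
        have hceq : H j1 jF = G j1 jF := by
          have hfact : (H j1 jF - G j1 jF) * (H j1 jF + G j1 jF) = 0 := by ring_nf; linarith
          rcases mul_eq_zero.mp hfact with h | h
          · linarith
          · linarith
        have := hcoleq i
        rw [hceq] at this
        exact mul_right_cancel₀ (ne_of_gt hGp) this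
  have hVQ : V = Q := by
    ext i l
    have := main l.val l.isLt i
    simpa using this
  have hHG : H = G := by
    rw [hVQ] at hH
    exact hH.symm.trans hG
  refine ⟨hVQ, hHG, ?_⟩
  have hrf : Matrix.vecMulVec r (Pi.single (Fin.last K) (1:ℝ))
      = Matrix.vecMulVec f (Pi.single (Fin.last K) (1:ℝ)) := by
    have h1 := hfactV
    rw [hVQ, hHG] at h1
    rw [h1] at hfactQ
    exact add_left_cancel hfactQ
  funext i
  have := congrFun (congrFun hrf i) (Fin.last K)
  simpa [Matrix.vecMulVec_apply] using this
end

section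
/- Let (û, θ) be a Ritz pair with ‖Ωû‖ = 1, and suppose Ω is an ε-embedding (0 ≤ ε < 1) for a subspace containing both û and Aû - θû. Then √((1-ε)/(1+ε)) ‖Ω(Aû - θû)‖ ≤ ‖Aû - θû‖/‖û‖ ≤ √((1+ε)/(1-ε)) ‖Ω(Aû - θû)‖. -/
open Matrix

noncomputable def euclNorm {n : ℕ} (x : Fin n → ℝ) : ℝ := Real.sqrt (∑ i, x i ^ 2)

lemma enorm_nonneg' {n : ℕ} (x : Fin n → ℝ) : 0 ≤ euclNorm x := Real.sqrt_nonneg _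

lemma sq_le_imp {x y : ℝ} (hx : 0 ≤ x) (hy : 0 ≤ y) (h : x ^ 2 ≤ y ^ 2) : x ≤ y := by
  nlinarith

theorem stmt13 {n d : ℕ} (A : Matrix (Fin n) (Fin n) ℝ) (Ω : Matrix (Fin d) (Fin n) ℝ)
    (u : Fin n → ℝ) (θ ε : ℝ) (hε0 : 0 ≤ ε) (hε1 : ε < 1)
    (hu0 : u ≠ 0) (hΩu : euclNorm (Ω.mulVec u) = 1)
    (hemb : ∀ z ∈ Submodule.span ℝ ({u, A.mulVec u} : Set (Fin n → ℝ)),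
      (1 - ε) * euclNorm z ^ 2 ≤ euclNorm (Ω.mulVec z) ^ 2 ∧
        euclNorm (Ω.mulVec z) ^ 2 ≤ (1 + ε) * euclNorm z ^ 2) :
    Real.sqrt ((1 - ε) / (1 + ε)) * euclNorm (Ω.mulVec (A.mulVec u - θ • u)) ≤
        euclNorm (A.mulVec u - θ • u) / euclNorm u ∧
    euclNorm (A.mulVec u - θ • u) / euclNorm u ≤
        Real.sqrt ((1 + ε) / (1 - ε)) * euclNorm (Ω.mulVec (A.mulVec u - θ • u)) := by
  have humem : u ∈ Submodule.span ℝ ({u, A.mulVec u} : Set (Fin n → ℝ)) :=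
    Submodule.subset_span (Set.mem_insert _ _)
  have hAmem : A.mulVec u ∈ Submodule.span ℝ ({u, A.mulVec u} : Set (Fin n → ℝ)) :=
    Submodule.subset_span (Set.mem_insert_of_mem _ rfl)
  have hrmem : A.mulVec u - θ • u ∈ Submodule.span ℝ ({u, A.mulVec u} : Set (Fin n → ℝ)) :=
    Submodule.sub_mem _ hAmem (Submodule.smul_mem _ _ humem)
  obtain ⟨hu1, hu2⟩ := hemb u humem
  obtain ⟨hr1, hr2⟩ := hemb _ hrmem
  rw [hΩu] at hu1 hu2
  set a := euclNorm u with ha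
  set b := euclNorm (A.mulVec u - θ • u) with hb
  set c := euclNorm (Ω.mulVec (A.mulVec u - θ • u)) with hc
  have ha0 : 0 ≤ a := enorm_nonneg' _
  have hb0 : 0 ≤ b := enorm_nonneg' _
  have hc0 : 0 ≤ c := enorm_nonneg' _
  have hap : 0 < a := by nlinarith
  have h1e : (0:ℝ) < 1 - ε := by linarith
  have h2e : (0:ℝ) < 1 + ε := by linarith
  constructor
  · apply sq_le_imp (by positivity) (by positivity)
    rw [mul_pow, Real.sq_sqrt (by positivity), div_pow, div_mul_eq_mul_div,
      div_le_div_iff₀ (by positivity) (by positivity)]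
    nlinarith
  · apply sq_le_imp (by positivity) (by positivity)
    rw [mul_pow, Real.sq_sqrt (by positivity), div_pow,
      div_le_iff₀ (by positivity)]
    have key : b ^ 2 ≤ (1 + ε) / (1 - ε) * c ^ 2 * a ^ 2 := by
      rw [div_mul_eq_mul_div, div_mul_eq_mul_div, le_div_iff₀ h1e]
      nlinarith
    linarith
end

section
/- Let AV = VH + re_mᵀ with V ∈ ℝ^{n×m} Ω-orthonormal and r Ω-orthogonal to V, and let Q ∈ ℝ^{m×m} be orthogonal. Write H⁺ = QᵀHQ and V⁺ = VQ. Then for any k < m, the truncated factorization A V⁺(:,1:k) = V⁺(:,1:k) H⁺(1:k,1:k) + r̃ e_kᵀ holds with r̃ = H⁺(k+1,k)·V⁺(:,k+1) + Q(m,k)·r, provided H⁺ is upper Hessenberg and e_mᵀQ has zeros in its first k-1 entries; moreover V⁺(:,1:k) is Ω-orthonormal and r̃ is Ω-orthogonal to V⁺(:,1:k). -/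
/-!
Rotating by the orthogonal `Q` preserves the shape of the relation: `A (VQ) = (VQ)(QᵀHQ) + r (e_mᵀQ)`,
`VQ` is still `Ω`-orthonormal and `r` still `Ω`-orthogonal to it. Keep the first `k` columns. Since
`H⁺` is upper Hessenberg, column `j ≤ k` of `(VQ) H⁺` involves only the columns `≤ k + 1` of `VQ`,
and column `k + 1` enters only for `j = k`; the residual `r (e_mᵀQ)` also lives in column `k` alone,
because `e_mᵀQ` vanishes before position `k`. Both leftovers merge into `r̃ e_kᵀ`, and `r̃` is
`Ω`-orthogonal to the kept columns because it combines column `k + 1` of `VQ` with `r`.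
Here indices are 1-based; in Lean they are 0-based and `k = K + 1`, `m = M + 1`.
-/

open Matrix

namespace Matrix

variable {R : Type*} [CommSemiring R] {ι κ m p : Type*}

def IsUpperHessenberg {m : ℕ} (G : Matrix (Fin m) (Fin m) R) : Prop :=
  ∀ i j : Fin m, (j : ℕ) + 1 < i → G i j = 0

theorem mul_submatrix_id [Fintype ι] (A : Matrix κ ι R) (B : Matrix ι m R) (f : p → m) :
    A * B.submatrix id f = (A * B).submatrix id f :=
  rfl

theorem mul_mul_eq_mul_add_vecMulVec_of_mul_transpose_eq_one [Fintype ι] [Fintype m]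
    [DecidableEq m] {A : Matrix ι ι R} {V : Matrix ι m R} {H Q : Matrix m m R} {r : ι → R}
    {e : m → R} (hQ : Q * Qᵀ = 1) (hfact : A * V = V * H + vecMulVec r e) :
    A * (V * Q) = V * Q * (Qᵀ * H * Q) + vecMulVec r (e ᵥ* Q) := by
  have hVH : V * H * Q = V * Q * (Qᵀ * H * Q) := by
    rw [Matrix.mul_assoc V Q, ← Matrix.mul_assoc Q, ← Matrix.mul_assoc Q, hQ, Matrix.one_mul,
      Matrix.mul_assoc]
  rw [← Matrix.mul_assoc, hfact, Matrix.add_mul, hVH, vecMulVec_mul]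

theorem transpose_mul_self_mul_eq_one [Fintype κ] [Fintype m] [DecidableEq m] [DecidableEq p]
    {B : Matrix κ m R} {Q : Matrix m p R} (hB : Bᵀ * B = 1) (hQ : Qᵀ * Q = 1) :
    (B * Q)ᵀ * (B * Q) = 1 := by
  rw [transpose_mul, Matrix.mul_assoc, ← Matrix.mul_assoc Bᵀ, hB, Matrix.one_mul, hQ]

theorem transpose_mul_mulVec_eq_zero [Fintype κ] [Fintype m] {B : Matrix κ m R}
    (Q : Matrix m p R) {s : κ → R} (hs : Bᵀ *ᵥ s = 0) : (B * Q)ᵀ *ᵥ s = 0 := by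
  rw [transpose_mul, ← mulVec_mulVec, hs, mulVec_zero]

theorem transpose_mul_self_submatrix_eq_one [Fintype κ] [DecidableEq m] [DecidableEq p]
    {B : Matrix κ m R} (hB : Bᵀ * B = 1) {f : p → m} (hf : Function.Injective f) :
    (B.submatrix id f)ᵀ * B.submatrix id f = 1 := by
  rw [transpose_submatrix, ← submatrix_mul _ _ _ _ _ Function.bijective_id, hB, submatrix_one _ hf]

theorem transpose_mul_submatrix_mulVec_eq_zero [Fintype ι] [Fintype κ] [Fintype m] [DecidableEq m]
    {Ω : Matrix κ ι R} {W : Matrix ι m R} (hW : (Ω * W)ᵀ * (Ω * W) = 1) {r : ι → R}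
    (hr : (Ω * W)ᵀ *ᵥ (Ω *ᵥ r) = 0) {f : p → m} {k : m} (hk : ∀ a, f a ≠ k) (c d : R) :
    (Ω * W.submatrix id f)ᵀ *ᵥ (Ω *ᵥ fun i => c * W i k + d * r i) = 0 := by
  have hres : (fun i => c * W i k + d * r i) = c • (W *ᵥ Pi.single k 1) + d • r := by
    rw [mulVec_single_one]
    rfl
  rw [hres]
  funext a
  change ((Ω * W)ᵀ *ᵥ (Ω *ᵥ (c • (W *ᵥ Pi.single k 1) + d • r))) (f a) = 0
  rw [mulVec_add, mulVec_smul, mulVec_smul, mulVec_mulVec, mulVec_add, mulVec_smul, mulVec_smul,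
    mulVec_mulVec, hW, hr, one_mulVec]
  simp [hk a]

section Hessenberg

variable {K M : ℕ} (hKM : K + 1 < M + 1)

theorem IsUpperHessenberg.mul_apply_castLE {G : Matrix (Fin (M + 1)) (Fin (M + 1)) R}
    (hG : G.IsUpperHessenberg) [Fintype ι] (W : Matrix ι (Fin (M + 1)) R) (i : ι)
    (j : Fin (K + 1)) :
    (W * G) i (Fin.castLE hKM.le j) =
      (W.submatrix id (Fin.castLE hKM.le) * G.submatrix (Fin.castLE hKM.le) (Fin.castLE hKM.le))
          i j + W i ⟨K + 1, hKM⟩ * G ⟨K + 1, hKM⟩ (Fin.castLE hKM.le j) := by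
  have hK2 : K + 2 ≤ M + 1 := hKM
  rw [mul_apply, mul_apply, ← Fintype.sum_of_injective (Fin.castLE hK2) (Fin.castLE_injective _)
    (fun l => W i (Fin.castLE hK2 l) * G (Fin.castLE hK2 l) (Fin.castLE hKM.le j)) _ ?_
    (fun _ => rfl), Fin.sum_univ_castSucc]
  · rfl
  intro l hl
  have hKl : K + 2 ≤ (l : ℕ) := by
    by_contra! h
    exact hl ⟨⟨l, h⟩, rfl⟩
  rw [hG l _ (by simp; omega), mul_zero]

theorem IsUpperHessenberg.mul_submatrix_castLE_eq {A : Matrix ι ι R}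
    {W : Matrix ι (Fin (M + 1)) R} {G : Matrix (Fin (M + 1)) (Fin (M + 1)) R} {r : ι → R}
    {q : Fin (M + 1) → R} [Fintype ι] (hG : G.IsUpperHessenberg)
    (hq : ∀ j : Fin (M + 1), (j : ℕ) < K → q j = 0) (hrel : A * W = W * G + vecMulVec r q) :
    A * W.submatrix id (Fin.castLE hKM.le) =
      W.submatrix id (Fin.castLE hKM.le) * G.submatrix (Fin.castLE hKM.le) (Fin.castLE hKM.le) +
        vecMulVec (fun i => G ⟨K + 1, hKM⟩ ⟨K, by omega⟩ * W i ⟨K + 1, hKM⟩ + q ⟨K, by omega⟩ * r i)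
          (Pi.single (Fin.last K) 1) := by
  ext i j
  rw [mul_submatrix_id, submatrix_apply, hrel, add_apply, hG.mul_apply_castLE hKM, add_apply,
    vecMulVec_apply, vecMulVec_apply, add_assoc]
  congr 1
  rcases eq_or_ne j (Fin.last K) with rfl | hj
  · rw [Pi.single_eq_same, mul_one]
    exact congrArg₂ (· + ·) (mul_comm _ _) (mul_comm _ _)
  · have hjK : (j : ℕ) < K := Fin.val_lt_last hj
    rw [hG _ _ (by simp; omega), hq _ hjK, Pi.single_eq_of_ne hj]
    ring

end Hessenberg

end Matrix

theorem stmt15 {n M K d : ℕ} (hKM : K + 1 < M + 1)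
    (A : Matrix (Fin n) (Fin n) ℝ) (Ω : Matrix (Fin d) (Fin n) ℝ)
    (V : Matrix (Fin n) (Fin (M + 1)) ℝ) (H Q : Matrix (Fin (M + 1)) (Fin (M + 1)) ℝ)
    (r : Fin n → ℝ)
    (hVorth : (Ω * V)ᵀ * (Ω * V) = 1)
    (hrorth : (Ω * V)ᵀ.mulVec (Ω.mulVec r) = 0)
    (hfact : A * V = V * H + Matrix.vecMulVec r (Pi.single (Fin.last M) 1))
    (hQ : Qᵀ * Q = 1)
    (hHplusHess : ∀ i j : Fin (M + 1), (j : ℕ) + 1 < (i : ℕ) → (Qᵀ * H * Q) i j = 0)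
    (hQrow : ∀ j : Fin (M + 1), (j : ℕ) < K → Q (Fin.last M) j = 0) :
    let Vp : Matrix (Fin n) (Fin (K + 1)) ℝ :=
      (V * Q).submatrix id (Fin.castLE (by omega))
    let Hp : Matrix (Fin (K + 1)) (Fin (K + 1)) ℝ :=
      (Qᵀ * H * Q).submatrix (Fin.castLE (by omega)) (Fin.castLE (by omega))
    let rt : Fin n → ℝ := fun i =>
      (Qᵀ * H * Q) ⟨K + 1, hKM⟩ ⟨K, by omega⟩ * (V * Q) i ⟨K + 1, hKM⟩ +
        Q (Fin.last M) ⟨K, by omega⟩ * r i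
    A * Vp = Vp * Hp + Matrix.vecMulVec rt (Pi.single (Fin.last K) 1) ∧
    (Ω * Vp)ᵀ * (Ω * Vp) = 1 ∧
    (Ω * Vp)ᵀ.mulVec (Ω.mulVec rt) = 0 := by
  intro Vp Hp rt
  have hrot := mul_mul_eq_mul_add_vecMulVec_of_mul_transpose_eq_one (mul_eq_one_comm.mp hQ) hfact
  rw [single_one_vecMul] at hrot
  have hWorth : (Ω * (V * Q))ᵀ * (Ω * (V * Q)) = 1 := by
    rw [← Matrix.mul_assoc Ω V Q]
    exact transpose_mul_self_mul_eq_one hVorth hQ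
  have hWr : (Ω * (V * Q))ᵀ *ᵥ (Ω *ᵥ r) = 0 := by
    rw [← Matrix.mul_assoc Ω V Q]
    exact transpose_mul_mulVec_eq_zero Q hrorth
  have hK : ∀ a : Fin (K + 1), Fin.castLE hKM.le a ≠ ⟨K + 1, hKM⟩ := fun a =>
    Fin.ne_of_val_ne (by simp; omega)
  refine ⟨IsUpperHessenberg.mul_submatrix_castLE_eq hKM hHplusHess hQrow hrot, ?_,
    transpose_mul_submatrix_mulVec_eq_zero hWorth hWr hK _ _⟩
  rw [mul_submatrix_id]
  exact transpose_mul_self_submatrix_eq_one hWorth (Fin.castLE_injective _)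
end

section
/- Let AV = VH + re_kᵀ be a randomized Arnoldi factorization (V Ω-orthonormal, r Ω-orthogonal to V, H unreduced upper Hessenberg, V(:,1) = v₁ with ‖Ωv₁‖ = 1). Then the characteristic polynomial p̂_k of H minimizes ‖Ω p(A) v₁‖ over all monic polynomials p of degree k: for every monic p of degree k, ‖Ω p̂_k(A) v₁‖ ≤ ‖Ω p(A) v₁‖. -/
open Matrix Polynomial

noncomputable def enorm {n : ℕ} (x : Fin n → ℝ) : ℝ := Real.sqrt (∑ i, x i ^ 2)

lemma hess_pow {K : ℕ} (H : Matrix (Fin (K+1)) (Fin (K+1)) ℝ)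
    (hhess : ∀ i j : Fin (K + 1), (j : ℕ) + 1 < (i : ℕ) → H i j = 0) :
    ∀ (m : ℕ) (a b : Fin (K+1)), (b : ℕ) + m < (a : ℕ) → (H ^ m) a b = 0 := by
  intro m
  induction m with
  | zero =>
    intro a b h
    rw [pow_zero, Matrix.one_apply_ne]
    intro hab; rw [hab] at h; omega
  | succ m ih =>
    intro a b h
    rw [pow_succ', Matrix.mul_apply]
    apply Finset.sum_eq_zero
    intro c _
    by_cases hc : (c : ℕ) + 1 < (a : ℕ)
    · rw [hhess a c hc, zero_mul]
    · rw [ih c b (by omega), mul_zero]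

lemma sum_mulVec {n m : ℕ} {ι : Type*} (s : Finset ι) (f : ι → Matrix (Fin n) (Fin m) ℝ)
    (v : Fin m → ℝ) : (∑ i ∈ s, f i).mulVec v = ∑ i ∈ s, (f i).mulVec v := by
  ext j
  simp only [Matrix.mulVec, dotProduct, Matrix.sum_apply, Finset.sum_mul, Finset.sum_apply]
  exact Finset.sum_comm ..


lemma pow_fact {n K : ℕ} (A : Matrix (Fin n) (Fin n) ℝ)
    (V : Matrix (Fin n) (Fin (K + 1)) ℝ) (H : Matrix (Fin (K + 1)) (Fin (K + 1)) ℝ)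
    (r v₁ : Fin n → ℝ)
    (hv1 : (fun i => V i 0) = v₁)
    (hhess : ∀ i j : Fin (K + 1), (j : ℕ) + 1 < (i : ℕ) → H i j = 0)
    (hfact : A * V = V * H + Matrix.vecMulVec r (Pi.single (Fin.last K) 1)) :
    ∀ m : ℕ, m ≤ K + 1 → (A ^ m).mulVec v₁ =
      V.mulVec ((H ^ m).mulVec (Pi.single 0 1)) +
      (if m = K + 1 then (H ^ K) (Fin.last K) 0 else 0) • r := by
  intro m
  induction m with
  | zero =>
    intro _
    rw [pow_zero, pow_zero, Matrix.one_mulVec, if_neg (by omega), zero_smul,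
      add_zero, Matrix.one_mulVec, Matrix.mulVec_single]
    subst hv1; ext i; simp
  | succ m ih =>
    intro hm
    have hm' : m ≤ K + 1 := le_of_lt hm
    rw [pow_succ', ← Matrix.mulVec_mulVec, ih hm', if_neg (by omega),
      zero_smul, add_zero, Matrix.mulVec_mulVec, hfact, Matrix.add_mulVec]
    congr 1
    · rw [← Matrix.mulVec_mulVec, Matrix.mulVec_mulVec _ H, ← pow_succ']
    · have hv : Matrix.vecMulVec r (Pi.single (Fin.last K) 1) *ᵥ (H ^ m *ᵥ Pi.single 0 1)
          = ((H ^ m) (Fin.last K) 0) • r := by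
        ext i
        simp [Matrix.mulVec, dotProduct, Matrix.vecMulVec_apply, Pi.single_apply,
          ite_mul, zero_mul, one_mul, mul_ite, mul_zero, mul_one, mul_comm]
      rw [hv]
      by_cases hmk : m = K
      · subst hmk; rw [if_pos rfl]
      · rw [hess_pow H hhess m (Fin.last K) 0 (by simp [Fin.last]; omega),
          if_neg (by omega)]

lemma mulVec_finsum {n m : ℕ} {ι : Type*} (s : Finset ι) (M : Matrix (Fin n) (Fin m) ℝ)
    (f : ι → Fin m → ℝ) : M.mulVec (∑ i ∈ s, f i) = ∑ i ∈ s, M.mulVec (f i) := by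
  ext j
  simp only [Matrix.mulVec, dotProduct, Finset.sum_apply, Finset.mul_sum]
  exact Finset.sum_comm ..

lemma poly_fact {n K : ℕ} (A : Matrix (Fin n) (Fin n) ℝ)
    (V : Matrix (Fin n) (Fin (K + 1)) ℝ) (H : Matrix (Fin (K + 1)) (Fin (K + 1)) ℝ)
    (r v₁ : Fin n → ℝ)
    (hv1 : (fun i => V i 0) = v₁)
    (hhess : ∀ i j : Fin (K + 1), (j : ℕ) + 1 < (i : ℕ) → H i j = 0)
    (hfact : A * V = V * H + Matrix.vecMulVec r (Pi.single (Fin.last K) 1))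
    (p : Polynomial ℝ) (hp : p.natDegree ≤ K + 1) :
    (Polynomial.aeval A p).mulVec v₁ =
      V.mulVec ((Polynomial.aeval H p).mulVec (Pi.single 0 1)) +
      (p.coeff (K + 1) * (H ^ K) (Fin.last K) 0) • r := by
  rw [Polynomial.aeval_eq_sum_range' (Nat.lt_succ_of_le hp) A,
    Polynomial.aeval_eq_sum_range' (Nat.lt_succ_of_le hp) H,
    sum_mulVec, sum_mulVec, mulVec_finsum]
  have step : ∀ i ∈ Finset.range (K + 2),
      (p.coeff i • A ^ i).mulVec v₁ =
        V.mulVec ((p.coeff i • H ^ i).mulVec (Pi.single 0 1)) +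
        (if i = K + 1 then p.coeff i * (H ^ K) (Fin.last K) 0 else 0) • r := by
    intro i hi
    rw [Matrix.smul_mulVec, Matrix.smul_mulVec, Matrix.mulVec_smul,
      pow_fact A V H r v₁ hv1 hhess hfact i (Nat.lt_succ_iff.mp (Finset.mem_range.mp hi)),
      smul_add, smul_smul, mul_ite, mul_zero]
  rw [Finset.sum_congr rfl step, Finset.sum_add_distrib]
  congr 1
  rw [Finset.sum_eq_single_of_mem (K + 1) (Finset.self_mem_range_succ _)
    (fun b _ hb => by rw [if_neg hb, zero_smul]), if_pos rfl]

theorem stmt19 {n K d : ℕ} (A : Matrix (Fin n) (Fin n) ℝ) (hA : Invertible A)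
    (Ω : Matrix (Fin d) (Fin n) ℝ)
    (V : Matrix (Fin n) (Fin (K + 1)) ℝ) (H : Matrix (Fin (K + 1)) (Fin (K + 1)) ℝ)
    (r v₁ : Fin n → ℝ)
    (hv1 : (fun i => V i 0) = v₁) (hv1n : _root_.enorm (Ω.mulVec v₁) = 1)
    (hVorth : (Ω * V)ᵀ * (Ω * V) = 1)
    (hrorth : (Ω * V)ᵀ.mulVec (Ω.mulVec r) = 0)
    (hhess : ∀ i j : Fin (K + 1), (j : ℕ) + 1 < (i : ℕ) → H i j = 0)
    (hunred : ∀ i j : Fin (K + 1), (i : ℕ) = (j : ℕ) + 1 → 0 < H i j)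
    (hfact : A * V = V * H + Matrix.vecMulVec r (Pi.single (Fin.last K) 1))
    (hspan : Submodule.span ℝ (Set.range (fun j : Fin (K + 1) => fun i => V i j)) =
      Submodule.span ℝ (Set.range (fun j : Fin (K + 1) => (A ^ (j : ℕ)).mulVec v₁))) :
    ∀ q : Polynomial ℝ, q.Monic → q.natDegree = K + 1 →
      _root_.enorm (Ω.mulVec ((aeval A H.charpoly).mulVec v₁)) ≤
        _root_.enorm (Ω.mulVec ((aeval A q).mulVec v₁)) := by
  intro q hqm hqd
  set c := (H ^ K) (Fin.last K) 0 with hc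
  have hpd : H.charpoly.natDegree = K + 1 := by
    rw [Matrix.charpoly_natDegree_eq_dim, Fintype.card_fin]
  have hpcoeff : H.charpoly.coeff (K + 1) = 1 := by
    have h := H.charpoly_monic.coeff_natDegree; rwa [hpd] at h
  have hqcoeff : q.coeff (K + 1) = 1 := by
    have h := hqm.coeff_natDegree; rwa [hqd] at h
  have h1 : (aeval A H.charpoly).mulVec v₁ = c • r := by
    rw [poly_fact A V H r v₁ hv1 hhess hfact _ hpd.le, Matrix.aeval_self_charpoly,
      Matrix.zero_mulVec, Matrix.mulVec_zero, zero_add, hpcoeff, one_mul]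
  have h2 : (aeval A q).mulVec v₁ =
      V.mulVec ((aeval H q).mulVec (Pi.single 0 1)) + c • r := by
    rw [poly_fact A V H r v₁ hv1 hhess hfact _ hqd.le, hqcoeff, one_mul]
  set x := (aeval H q).mulVec (Pi.single 0 1) with hx
  set w := Ω.mulVec r with hw
  set b := (Ω * V).mulVec x with hb
  have hΩ1 : Ω.mulVec ((aeval A H.charpoly).mulVec v₁) = c • w := by
    rw [h1, Matrix.mulVec_smul]
  have hΩ2 : Ω.mulVec ((aeval A q).mulVec v₁) = b + c • w := by
    rw [h2, Matrix.mulVec_add, Matrix.mulVec_smul, Matrix.mulVec_mulVec]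
  have hcol : ∀ j, ∑ i, (Ω * V) i j * w i = 0 := by
    intro j
    have h := congrFun hrorth j
    simpa [Matrix.mulVec, dotProduct, Matrix.transpose_apply, mul_comm] using h
  have horth : ∑ i, b i * w i = 0 := by
    simp only [hb, Matrix.mulVec, dotProduct, Finset.sum_mul]
    rw [Finset.sum_comm]
    apply Finset.sum_eq_zero
    intro j _
    have hterm : ∀ i : Fin d, (Ω * V) i j * x j * w i = x j * ((Ω * V) i j * w i) :=
      fun i => by ring
    rw [Finset.sum_congr rfl (fun i _ => hterm i), ← Finset.mul_sum, hcol j, mul_zero]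
  rw [hΩ1, hΩ2]
  unfold _root_.enorm
  apply Real.sqrt_le_sqrt
  have hsum : ∑ i, (b i + (c • w) i) ^ 2 =
      ∑ i, b i ^ 2 + (2 * c) * (∑ i, b i * w i) + ∑ i, (c • w) i ^ 2 := by
    simp only [Pi.smul_apply, smul_eq_mul, Finset.mul_sum]
    rw [← Finset.sum_add_distrib, ← Finset.sum_add_distrib]
    exact Finset.sum_congr rfl fun i _ => by ring
  have hbn : 0 ≤ ∑ i, b i ^ 2 := Finset.sum_nonneg fun i _ => sq_nonneg _
  calc ∑ i, (c • w) i ^ 2 ≤ ∑ i, b i ^ 2 + (2 * c) * (∑ i, b i * w i) + ∑ i, (c • w) i ^ 2 := by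
        rw [horth, mul_zero, add_zero]; linarith
    _ = ∑ i, (b i + (c • w) i) ^ 2 := hsum.symm
    _ = ∑ i, (b + c • w) i ^ 2 := by simp only [Pi.add_apply]
end
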